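/- Let G be a finite connected simple graph, κ_0 ∈ ℝ, and suppose x_0, x_1, …, x_k is a geodesic path (d(x_0,x_k) = k and consecutive vertices adjacent). With I_{κ_0} = ∑_{xy∈E} max{0, κ_0 − κ_LLY(x,y)}, we have κ_LLY(x_0,x_k) ≥ (∑_{i=1}^k κ_LLY(x_{i-1},x_i))/k ≥ κ_0 − I_{κ_0}/k. -/

import Mathlib

open Finset

/-- A probability measure on a finite set, given as a density. -/
def IsProbMeasure {V : Type*} [Fintype V] (m : V → ℝ) : Prop :=
  (∀ x, 0 ≤ m x) ∧ ∑ x, m x = 1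

/-- A coupling between two probability measures on a finite set. -/
def IsCoupling {V : Type*} [Fintype V] (A : V × V → ℝ) (m₁ m₂ : V → ℝ) : Prop :=
  (∀ p, 0 ≤ A p) ∧ (∀ x, ∑ y, A (x, y) = m₁ x) ∧ (∀ y, ∑ x, A (x, y) = m₂ y)

/-- The Wasserstein-1 (transportation) distance between two probability measures on a
finite set, with respect to a cost `d`. -/
noncomputable def W {V : Type*} [Fintype V] (d : V → V → ℝ) (m₁ m₂ : V → ℝ) : ℝ :=
  sInf {c | ∃ A, IsCoupling A m₁ m₂ ∧ c = ∑ p : V × V, A p * d p.1 p.2}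

lemma W_symm {V : Type*} [Fintype V] (d : V → V → ℝ) (hd : ∀ x y, d x y = d y x)
    (m₁ m₂ : V → ℝ) : W d m₁ m₂ = W d m₂ m₁ := by
  have key : ∀ m₁ m₂ : V → ℝ,
      {c | ∃ A, IsCoupling A m₁ m₂ ∧ c = ∑ p : V × V, A p * d p.1 p.2} ⊆
      {c | ∃ A, IsCoupling A m₂ m₁ ∧ c = ∑ p : V × V, A p * d p.1 p.2} := by
    rintro m₁ m₂ c ⟨A, ⟨h0, h1, h2⟩, rfl⟩
    refine ⟨fun p => A (p.2, p.1), ⟨fun p => h0 _, fun x => h2 x, fun y => h1 y⟩, ?_⟩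
    refine Fintype.sum_equiv (Equiv.prodComm V V) _ _ ?_
    intro p
    simp [Equiv.prodComm, hd p.1 p.2]
  unfold W
  congr 1
  exact Set.Subset.antisymm (key m₁ m₂) (key m₂ m₁)

/-- The `α`-lazy random walk measure at a vertex `x` of a graph. -/
noncomputable def lazyWalk {V : Type*} [Fintype V] [DecidableEq V] (G : SimpleGraph V)
    [DecidableRel G.Adj] (α : ℝ) (x : V) : V → ℝ :=
  fun v => if v = x then α else if G.Adj x v then (1 - α) / (G.degree x) else 0

/-- The `α`-Ricci curvature `κ_α(x,y) = 1 - W(m_x^α, m_y^α)/d(x,y)`. -/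
noncomputable def kappaAlpha {V : Type*} [Fintype V] [DecidableEq V] (G : SimpleGraph V)
    [DecidableRel G.Adj] (α : ℝ) (x y : V) : ℝ :=
  1 - W (fun a b => (G.dist a b : ℝ)) (lazyWalk G α x) (lazyWalk G α y) / (G.dist x y)

lemma kappaAlpha_symm {V : Type*} [Fintype V] [DecidableEq V] (G : SimpleGraph V)
    [DecidableRel G.Adj] (α : ℝ) (x y : V) :
    kappaAlpha G α x y = kappaAlpha G α y x := by
  unfold kappaAlpha
  rw [W_symm _ (fun a b => by rw [SimpleGraph.dist_comm]),
    SimpleGraph.dist_comm]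

/-- The Lin–Lu–Yau Ricci curvature `κ_LLY(x,y) = lim_{α → 1⁻} κ_α(x,y)/(1-α)`. -/
noncomputable def kappaLLY {V : Type*} [Fintype V] [DecidableEq V] (G : SimpleGraph V)
    [DecidableRel G.Adj] (x y : V) : ℝ :=
  Filter.limUnder (nhdsWithin 1 (Set.Ico (0:ℝ) 1)) (fun α => kappaAlpha G α x y / (1 - α))

lemma kappaLLY_symm {V : Type*} [Fintype V] [DecidableEq V] (G : SimpleGraph V)
    [DecidableRel G.Adj] (x y : V) : kappaLLY G x y = kappaLLY G y x := by
  unfold kappaLLY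
  congr 1
  funext α
  rw [kappaAlpha_symm]

/-- Integral `α`-Ricci curvature `I^α_{κ₀}`: total amount of `α`-Ricci curvature below the
threshold `(1-α)κ₀`, summed over the edges of `G`. -/
noncomputable def IAlpha {V : Type*} [Fintype V] [DecidableEq V] (G : SimpleGraph V)
    [DecidableRel G.Adj] (α κ₀ : ℝ) : ℝ :=
  ∑ e ∈ G.edgeFinset,
    Sym2.lift ⟨fun x y => max 0 ((1 - α) * κ₀ - kappaAlpha G α x y),
      fun x y => by simp only []; rw [kappaAlpha_symm]⟩ e

/-- Integral Lin–Lu–Yau Ricci curvature `I_{κ₀}`: total amount of Lin–Lu–Yau Ricci curvature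
below the threshold `κ₀`, summed over the edges of `G`. -/
noncomputable def ILLY {V : Type*} [Fintype V] [DecidableEq V] (G : SimpleGraph V)
    [DecidableRel G.Adj] (κ₀ : ℝ) : ℝ :=
  ∑ e ∈ G.edgeFinset,
    Sym2.lift ⟨fun x y => max 0 (κ₀ - kappaLLY G x y),
      fun x y => by simp only []; rw [kappaLLY_symm]⟩ e

/-- The diameter of a finite graph. -/
noncomputable def gDiam {V : Type*} [Fintype V] (G : SimpleGraph V) : ℕ :=
  Finset.univ.sup fun p : V × V => G.dist p.1 p.2


/-! For `0 ≤ α ≤ 1` the lazy walks are probability measures on a finite set, so optimal couplings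
exist, and gluing two of them along their common marginal gives the triangle inequality for `W`.
Since `d(x₀, x_k) = k` and consecutive points are at distance `1`, this turns into
`κ_α(x₀, x_k) ≥ (∑ κ_α(x_{i-1}, x_i)) / k` for every `α`.

Writing `m_x^β = λ δ_x + (1 - λ) m_x^α` with `λ = (β - α)/(1 - α)` and using joint convexity of `W`
shows that `κ_α(x, y)/(1 - α)` is monotone in `α`; testing against the `1`-Lipschitz function
`d(x, ·)` bounds it by `2`. Hence it converges to `κ_LLY(x, y)` as `α → 1⁻`, and the first
inequality passes to the limit. The second one holds because the edges of a geodesic are distinct,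
so their deficits `max 0 (κ₀ - κ_LLY)` add up to at most `I_{κ₀}`. -/

open Filter Topology

section Wasserstein
variable {V : Type*} [Fintype V]

def transportCost (d : V → V → ℝ) (A : V × V → ℝ) : ℝ := ∑ p : V × V, A p * d p.1 p.2

lemma transportCost_convexComb (d : V → V → ℝ) (A B : V × V → ℝ) (t : ℝ) :
    transportCost d (fun p => t * A p + (1 - t) * B p)
      = t * transportCost d A + (1 - t) * transportCost d B := by
  simp only [transportCost, add_mul, mul_assoc, Finset.sum_add_distrib, Finset.mul_sum]

lemma IsCoupling.le_fst {A : V × V → ℝ} {m₁ m₂ : V → ℝ} (hA : IsCoupling A m₁ m₂) (p : V × V) :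
    A p ≤ m₁ p.1 :=
  hA.2.1 p.1 ▸ Finset.single_le_sum (fun y _ => hA.1 (p.1, y)) (Finset.mem_univ p.2)

lemma IsCoupling.le_snd {A : V × V → ℝ} {m₁ m₂ : V → ℝ} (hA : IsCoupling A m₁ m₂) (p : V × V) :
    A p ≤ m₂ p.2 :=
  hA.2.2 p.2 ▸ Finset.single_le_sum (fun x _ => hA.1 (x, p.2)) (Finset.mem_univ p.1)

lemma isCompact_setOf_isCoupling (m₁ m₂ : V → ℝ) :
    IsCompact {A : V × V → ℝ | IsCoupling A m₁ m₂} := by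
  refine Metric.isCompact_of_isClosed_isBounded ?_
    ((Metric.isBounded_Icc 0 fun p => m₁ p.1).subset fun A hA => ⟨hA.1, hA.le_fst⟩)
  simp only [IsCoupling, Set.ofPred_and, Set.ofPred_forall]
  refine .inter (isClosed_iInter fun p => isClosed_le continuous_const (continuous_apply p))
    (.inter (isClosed_iInter fun x => isClosed_eq ?_ continuous_const)
      (isClosed_iInter fun y => isClosed_eq ?_ continuous_const)) <;> fun_prop

lemma exists_isLeast_transportCost (d : V → V → ℝ) {m₁ m₂ : V → ℝ} {A : V × V → ℝ}
    (hA : IsCoupling A m₁ m₂) : ∃ B, IsCoupling B m₁ m₂ ∧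
      IsLeast {c | ∃ A, IsCoupling A m₁ m₂ ∧ c = transportCost d A} (transportCost d B) := by
  obtain ⟨B, hB, hmin⟩ := (isCompact_setOf_isCoupling m₁ m₂).exists_isMinOn ⟨A, hA⟩
    (f := transportCost d) (by unfold transportCost; fun_prop)
  refine ⟨B, hB, ⟨B, hB, rfl⟩, ?_⟩
  rintro _ ⟨C, hC, rfl⟩
  exact hmin hC

lemma W_le_transportCost {d : V → V → ℝ} {m₁ m₂ : V → ℝ} {A : V × V → ℝ}
    (hA : IsCoupling A m₁ m₂) : W d m₁ m₂ ≤ transportCost d A := by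
  obtain ⟨B, -, hleast⟩ := exists_isLeast_transportCost d hA
  exact hleast.csInf_eq.trans_le (hleast.2 ⟨A, hA, rfl⟩)

lemma isCoupling_mul {m₁ m₂ : V → ℝ} (h₁ : IsProbMeasure m₁) (h₂ : IsProbMeasure m₂) :
    IsCoupling (fun p => m₁ p.1 * m₂ p.2) m₁ m₂ :=
  ⟨fun p => mul_nonneg (h₁.1 _) (h₂.1 _), fun x => by simp only [← Finset.mul_sum, h₂.2, mul_one],
    fun y => by simp only [← Finset.sum_mul, h₁.2, one_mul]⟩

lemma exists_isCoupling_transportCost_eq_W (d : V → V → ℝ) {m₁ m₂ : V → ℝ}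
    (h₁ : IsProbMeasure m₁) (h₂ : IsProbMeasure m₂) :
    ∃ A, IsCoupling A m₁ m₂ ∧ transportCost d A = W d m₁ m₂ := by
  obtain ⟨A, hA, hleast⟩ := exists_isLeast_transportCost d (isCoupling_mul h₁ h₂)
  exact ⟨A, hA, hleast.csInf_eq.symm⟩

lemma sub_le_W {d : V → V → ℝ} {m₁ m₂ : V → ℝ} (h₁ : IsProbMeasure m₁) (h₂ : IsProbMeasure m₂)
    {f : V → ℝ} (hf : ∀ a b, f b - f a ≤ d a b) :
    ∑ y, m₂ y * f y - ∑ x, m₁ x * f x ≤ W d m₁ m₂ := by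
  obtain ⟨A, hA, hAW⟩ := exists_isCoupling_transportCost_eq_W d h₁ h₂
  have hfst : ∑ x, m₁ x * f x = ∑ p : V × V, A p * f p.1 := by
    simp only [Fintype.sum_prod_type, ← Finset.sum_mul, hA.2.1]
  have hsnd : ∑ y, m₂ y * f y = ∑ p : V × V, A p * f p.2 := by
    simp only [Fintype.sum_prod_type_right, ← Finset.sum_mul, hA.2.2]
  rw [← hAW, hfst, hsnd, ← Finset.sum_sub_distrib, transportCost]
  gcongr with p
  rw [← mul_sub]
  exact mul_le_mul_of_nonneg_left (hf _ _) (hA.1 p)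

section Glue
variable {A B : V × V → ℝ} {m₁ m₂ m₃ : V → ℝ}

lemma IsCoupling.sum_glue_right (hA : IsCoupling A m₁ m₂) (hB : IsCoupling B m₂ m₃) (x y : V) :
    ∑ z, A (x, y) * B (y, z) / m₂ y = A (x, y) := by
  rw [← Finset.sum_div, ← Finset.mul_sum, hB.2.1]
  by_cases h : m₂ y = 0
  · simp [h, le_antisymm (h ▸ hA.le_snd (x, y)) (hA.1 _)]
  · field_simp

lemma IsCoupling.sum_glue_left (hA : IsCoupling A m₁ m₂) (hB : IsCoupling B m₂ m₃) (y z : V) :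
    ∑ x, A (x, y) * B (y, z) / m₂ y = B (y, z) := by
  rw [← Finset.sum_div, ← Finset.sum_mul, hA.2.2]
  by_cases h : m₂ y = 0
  · simp [h, le_antisymm (h ▸ hB.le_fst (y, z)) (hB.1 _)]
  · field_simp

-- Where `m₂ y = 0` the column `A (·, y)` vanishes, so the junk value `_ / 0 = 0` is the right one.
noncomputable def glueCoupling (m₂ : V → ℝ) (A B : V × V → ℝ) : V × V → ℝ :=
  fun q => ∑ y, A (q.1, y) * B (y, q.2) / m₂ y

lemma IsCoupling.glue (hA : IsCoupling A m₁ m₂) (hB : IsCoupling B m₂ m₃)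
    (h₂ : ∀ y, 0 ≤ m₂ y) : IsCoupling (glueCoupling m₂ A B) m₁ m₃ := by
  refine ⟨fun q => Finset.sum_nonneg fun y _ =>
    div_nonneg (mul_nonneg (hA.1 _) (hB.1 _)) (h₂ y), fun x => ?_, fun z => ?_⟩
  · simp only [glueCoupling]
    rw [Finset.sum_comm]
    simp only [hA.sum_glue_right hB, hA.2.1]
  · simp only [glueCoupling]
    rw [Finset.sum_comm]
    simp only [hA.sum_glue_left hB, hB.2.2]

lemma transportCost_glueCoupling_le {d : V → V → ℝ} (htri : ∀ a b c, d a c ≤ d a b + d b c)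
    (hA : IsCoupling A m₁ m₂) (hB : IsCoupling B m₂ m₃) (h₂ : ∀ y, 0 ≤ m₂ y) :
    transportCost d (glueCoupling m₂ A B) ≤ transportCost d A + transportCost d B := by
  calc transportCost d (glueCoupling m₂ A B)
      = ∑ x, ∑ z, ∑ y, A (x, y) * B (y, z) / m₂ y * d x z := by
        simp only [transportCost, glueCoupling, Fintype.sum_prod_type, Finset.sum_mul]
    _ ≤ ∑ x, ∑ z, ∑ y, A (x, y) * B (y, z) / m₂ y * (d x y + d y z) := by
        gcongr with x _ z _ y _
        · exact div_nonneg (mul_nonneg (hA.1 _) (hB.1 _)) (h₂ y)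
        · exact htri x y z
    _ = ∑ x, ∑ y, (∑ z, A (x, y) * B (y, z) / m₂ y) * d x y
          + ∑ y, ∑ z, (∑ x, A (x, y) * B (y, z) / m₂ y) * d y z := by
        simp only [mul_add, Finset.sum_add_distrib, Finset.sum_mul]
        congr 1
        · exact Finset.sum_congr rfl fun x _ => Finset.sum_comm
        · rw [Finset.sum_congr rfl fun x _ => Finset.sum_comm, Finset.sum_comm]
          exact Finset.sum_congr rfl fun y _ => Finset.sum_comm
    _ = transportCost d A + transportCost d B := by
        simp only [transportCost, Fintype.sum_prod_type, hA.sum_glue_right hB, hA.sum_glue_left hB]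

end Glue

lemma W_triangle {d : V → V → ℝ} (htri : ∀ a b c, d a c ≤ d a b + d b c) {m₁ m₂ m₃ : V → ℝ}
    (h₁ : IsProbMeasure m₁) (h₂ : IsProbMeasure m₂) (h₃ : IsProbMeasure m₃) :
    W d m₁ m₃ ≤ W d m₁ m₂ + W d m₂ m₃ := by
  obtain ⟨A, hA, hAW⟩ := exists_isCoupling_transportCost_eq_W d h₁ h₂
  obtain ⟨B, hB, hBW⟩ := exists_isCoupling_transportCost_eq_W d h₂ h₃
  calc W d m₁ m₃ ≤ transportCost d (glueCoupling m₂ A B) :=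
        W_le_transportCost (hA.glue hB h₂.1)
    _ ≤ W d m₁ m₂ + W d m₂ m₃ := hAW ▸ hBW ▸ transportCost_glueCoupling_le htri hA hB h₂.1

lemma W_le_sum_range {d : V → V → ℝ} (htri : ∀ a b c, d a c ≤ d a b + d b c)
    {μ : ℕ → V → ℝ} (hμ : ∀ i, IsProbMeasure (μ i)) {n : ℕ} (hn : 1 ≤ n) :
    W d (μ 0) (μ n) ≤ ∑ i ∈ Finset.range n, W d (μ i) (μ (i + 1)) := by
  induction n, hn using Nat.le_induction with
  | base => simp
  | succ n _ ih =>
    rw [Finset.sum_range_succ]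
    linarith [W_triangle htri (hμ 0) (hμ n) (hμ (n + 1))]

lemma IsCoupling.convexComb {A B : V × V → ℝ} {μ₁ ν₁ μ₂ ν₂ : V → ℝ} (hA : IsCoupling A μ₁ ν₁)
    (hB : IsCoupling B μ₂ ν₂) {t : ℝ} (ht₀ : 0 ≤ t) (ht₁ : t ≤ 1) :
    IsCoupling (fun p => t * A p + (1 - t) * B p)
      (fun x => t * μ₁ x + (1 - t) * μ₂ x) (fun y => t * ν₁ y + (1 - t) * ν₂ y) := by
  refine ⟨fun p => ?_, fun x => ?_, fun y => ?_⟩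
  · have := hA.1 p; have := hB.1 p; have : 0 ≤ 1 - t := by linarith
    positivity
  · simp only [Finset.sum_add_distrib, ← Finset.mul_sum, hA.2.1, hB.2.1]
  · simp only [Finset.sum_add_distrib, ← Finset.mul_sum, hA.2.2, hB.2.2]

lemma W_convexComb_le (d : V → V → ℝ) {μ₁ ν₁ μ₂ ν₂ : V → ℝ} (hμ₁ : IsProbMeasure μ₁)
    (hν₁ : IsProbMeasure ν₁) (hμ₂ : IsProbMeasure μ₂) (hν₂ : IsProbMeasure ν₂) {t : ℝ}
    (ht₀ : 0 ≤ t) (ht₁ : t ≤ 1) :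
    W d (fun x => t * μ₁ x + (1 - t) * μ₂ x) (fun y => t * ν₁ y + (1 - t) * ν₂ y)
      ≤ t * W d μ₁ ν₁ + (1 - t) * W d μ₂ ν₂ := by
  obtain ⟨A, hA, hAW⟩ := exists_isCoupling_transportCost_eq_W d hμ₁ hν₁
  obtain ⟨B, hB, hBW⟩ := exists_isCoupling_transportCost_eq_W d hμ₂ hν₂
  rw [← hAW, ← hBW, ← transportCost_convexComb]
  exact W_le_transportCost (hA.convexComb hB ht₀ ht₁)

variable [DecidableEq V]

lemma isProbMeasure_single (x : V) : IsProbMeasure (Pi.single x 1 : V → ℝ) :=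
  ⟨fun v => by rw [Pi.single_apply]; split <;> norm_num, by simp⟩

lemma W_single_le (d : V → V → ℝ) (x y : V) :
    W d (Pi.single x 1) (Pi.single y 1) ≤ d x y := by
  have hδ : IsCoupling (Pi.single (x, y) 1 : V × V → ℝ) (Pi.single x 1) (Pi.single y 1) := by
    refine ⟨fun p => ?_, fun a => ?_, fun b => ?_⟩
    · rw [Pi.single_apply]; split <;> norm_num
    · by_cases h : a = x <;> simp [Pi.single_apply, Prod.ext_iff, h]
    · by_cases h : b = y <;> simp [Pi.single_apply, Prod.ext_iff, h]
  refine (W_le_transportCost hδ).trans_eq ?_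
  simp [transportCost, Pi.single_apply]

end Wasserstein

section LazyWalk
variable {V : Type*} [Fintype V] [DecidableEq V] (G : SimpleGraph V) [DecidableRel G.Adj]

lemma sum_lazyWalk_mul (α : ℝ) (x : V) (g : V → ℝ) :
    ∑ v, lazyWalk G α x v * g v
      = α * g x + (1 - α) / G.degree x * ∑ v ∈ G.neighborFinset x, g v := by
  have h : ∀ v, lazyWalk G α x v * g v
      = (if v = x then α * g x else 0) + if G.Adj x v then (1 - α) / G.degree x * g v else 0 := by
    intro v
    unfold lazyWalk
    by_cases hv : v = x <;> simp [hv]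
  simp only [h, Finset.sum_add_distrib, Finset.sum_ite_eq', Finset.mem_univ, if_true,
    ← Finset.sum_filter, ← SimpleGraph.neighborFinset_eq_filter, Finset.mul_sum]

variable {G}

lemma isProbMeasure_lazyWalk {α : ℝ} (hα₀ : 0 ≤ α) (hα₁ : α ≤ 1) {x : V} (hx : 0 < G.degree x) :
    IsProbMeasure (lazyWalk G α x) := by
  refine ⟨fun v => ?_, ?_⟩
  · unfold lazyWalk
    split_ifs
    exacts [hα₀, div_nonneg (by linarith) (Nat.cast_nonneg _), le_rfl]
  · have := sum_lazyWalk_mul G α x fun _ => 1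
    simp only [mul_one, Finset.sum_const, SimpleGraph.card_neighborFinset_eq_degree,
      nsmul_eq_mul] at this
    rw [this]
    field_simp
    ring

lemma sum_lazyWalk_mul_dist (α : ℝ) {x : V} (hx : 0 < G.degree x) :
    ∑ v, lazyWalk G α x v * G.dist x v = 1 - α := by
  have hneighbor : ∀ v ∈ G.neighborFinset x, (G.dist x v : ℝ) = 1 := fun v hv => by
    rw [SimpleGraph.dist_eq_one_iff_adj.mpr ((G.mem_neighborFinset x v).mp hv), Nat.cast_one]
  rw [sum_lazyWalk_mul, Finset.sum_congr rfl hneighbor, Finset.sum_const,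
    SimpleGraph.card_neighborFinset_eq_degree, SimpleGraph.dist_self]
  field_simp
  simp

lemma lazyWalk_eq_convexComb {α : ℝ} (hα₁ : α < 1) (β : ℝ) (x : V) :
    lazyWalk G β x = fun v => (β - α) / (1 - α) * (Pi.single x 1 : V → ℝ) v
      + (1 - (β - α) / (1 - α)) * lazyWalk G α x v := by
  have h1α : 1 - α ≠ 0 := by linarith
  ext v
  unfold lazyWalk
  by_cases hv : v = x
  · simp only [hv, if_true, Pi.single_eq_same]
    field_simp
    ring
  · simp only [hv, if_false, Pi.single_eq_of_ne hv]
    split_ifs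
    · field_simp
      ring
    · ring

end LazyWalk

lemma SimpleGraph.Connected.cast_dist_triangle {V : Type*} {G : SimpleGraph V} (hG : G.Connected)
    (a b c : V) : (G.dist a c : ℝ) ≤ G.dist a b + G.dist b c := by
  exact_mod_cast hG.dist_triangle

section Curvature
variable {V : Type*} [Fintype V] [DecidableEq V] {G : SimpleGraph V} [DecidableRel G.Adj]

lemma sub_le_W_lazyWalk (hG : G.Connected) (hdeg : ∀ v, 0 < G.degree v) {α : ℝ} (hα₀ : 0 ≤ α)
    (hα₁ : α ≤ 1) (x y : V) :
    G.dist x y - 2 * (1 - α)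
      ≤ W (fun a b => (G.dist a b : ℝ)) (lazyWalk G α x) (lazyWalk G α y) := by
  have hmy := isProbMeasure_lazyWalk hα₀ hα₁ (hdeg y)
  have hlip : ∀ a b, (G.dist x b : ℝ) - G.dist x a ≤ G.dist a b := fun a b => by
    linarith [hG.cast_dist_triangle x a b]
  have hfar : G.dist x y - (1 - α) ≤ ∑ v, lazyWalk G α y v * G.dist x v := by
    calc G.dist x y - (1 - α) = ∑ v, lazyWalk G α y v * (G.dist x y - G.dist y v) := by
          simp only [mul_sub, Finset.sum_sub_distrib, ← Finset.sum_mul, hmy.2, one_mul,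
            sum_lazyWalk_mul_dist α (hdeg y)]
      _ ≤ ∑ v, lazyWalk G α y v * G.dist x v := by
          gcongr with v
          · exact hmy.1 v
          · linarith [G.dist_comm (u := y) (v := v) ▸ hG.cast_dist_triangle x v y]
  have := sub_le_W (isProbMeasure_lazyWalk hα₀ hα₁ (hdeg x)) hmy hlip
  rw [sum_lazyWalk_mul_dist α (hdeg x)] at this
  linarith

lemma kappaAlpha_div_le_two (hG : G.Connected) (hdeg : ∀ v, 0 < G.degree v) {x y : V}
    (hxy : x ≠ y) {α : ℝ} (hα₀ : 0 ≤ α) (hα₁ : α < 1) :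
    kappaAlpha G α x y / (1 - α) ≤ 2 := by
  have hD : (1 : ℝ) ≤ G.dist x y := by exact_mod_cast hG.pos_dist_of_ne hxy
  have hW := sub_le_W_lazyWalk hG hdeg hα₀ hα₁.le x y
  have h1α : 0 < 1 - α := by linarith
  rw [div_le_iff₀ h1α, kappaAlpha, sub_le_iff_le_add, ← sub_le_iff_le_add',
    le_div_iff₀ (by linarith)]
  nlinarith

lemma W_lazyWalk_le (hdeg : ∀ v, 0 < G.degree v) {α β : ℝ} (hα₀ : 0 ≤ α) (hαβ : α ≤ β)
    (hβ₁ : β < 1) (x y : V) :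
    (1 - α) * W (fun a b => (G.dist a b : ℝ)) (lazyWalk G β x) (lazyWalk G β y)
      ≤ (β - α) * G.dist x y
        + (1 - β) * W (fun a b => (G.dist a b : ℝ)) (lazyWalk G α x) (lazyWalk G α y) := by
  have h1α : 0 < 1 - α := by linarith
  have ht₀ : 0 ≤ (β - α) / (1 - α) := div_nonneg (by linarith) h1α.le
  have ht₁ : (β - α) / (1 - α) ≤ 1 := (div_le_one h1α).mpr (by linarith)
  have hmix := W_convexComb_le (fun a b => (G.dist a b : ℝ)) (isProbMeasure_single x)
    (isProbMeasure_single y) (isProbMeasure_lazyWalk hα₀ (by linarith) (hdeg x))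
    (isProbMeasure_lazyWalk hα₀ (by linarith) (hdeg y)) ht₀ ht₁
  rw [← lazyWalk_eq_convexComb (by linarith) β x, ← lazyWalk_eq_convexComb (by linarith) β y]
    at hmix
  calc (1 - α) * W (fun a b => (G.dist a b : ℝ)) (lazyWalk G β x) (lazyWalk G β y)
      ≤ (1 - α) * ((β - α) / (1 - α) * G.dist x y + (1 - (β - α) / (1 - α))
          * W (fun a b => (G.dist a b : ℝ)) (lazyWalk G α x) (lazyWalk G α y)) := by
        gcongr
        exact hmix.trans (by gcongr; exact W_single_le _ x y)
    _ = _ := by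
        field_simp
        ring

lemma kappaAlpha_div_monotoneOn (hG : G.Connected) (hdeg : ∀ v, 0 < G.degree v) {x y : V}
    (hxy : x ≠ y) : MonotoneOn (fun α => kappaAlpha G α x y / (1 - α)) (Set.Ico 0 1) := by
  rintro α ⟨hα₀, hα₁⟩ β ⟨-, hβ₁⟩ hαβ
  have hD : (0 : ℝ) < G.dist x y := by exact_mod_cast hG.pos_dist_of_ne hxy
  have hW := W_lazyWalk_le hdeg hα₀ hαβ hβ₁ x y
  have hscale : ∀ γ c : ℝ, (1 - W (fun a b => (G.dist a b : ℝ)) (lazyWalk G γ x) (lazyWalk G γ y)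
      / G.dist x y) * c = (G.dist x y
        - W (fun a b => (G.dist a b : ℝ)) (lazyWalk G γ x) (lazyWalk G γ y)) * c / G.dist x y :=
    fun γ c => by field_simp
  simp only [kappaAlpha]
  rw [div_le_div_iff₀ (by linarith) (by linarith), hscale, hscale]
  exact div_le_div_of_nonneg_right (by linarith) hD.le

lemma tendsto_kappaAlpha_div_kappaLLY (hG : G.Connected) (hdeg : ∀ v, 0 < G.degree v) {x y : V}
    (hxy : x ≠ y) :
    Tendsto (fun α => kappaAlpha G α x y / (1 - α)) (𝓝[<] 1) (𝓝 (kappaLLY G x y)) := by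
  have hbdd : BddAbove ((fun α => kappaAlpha G α x y / (1 - α)) '' Set.Ioo 0 1) := by
    refine ⟨2, ?_⟩
    rintro _ ⟨α, ⟨hα₀, hα₁⟩, rfl⟩
    exact kappaAlpha_div_le_two hG hdeg hxy hα₀.le hα₁
  have h := ((kappaAlpha_div_monotoneOn hG hdeg hxy).mono Set.Ioo_subset_Ico_self
    ).tendsto_nhdsWithin_Ioo_left ⟨1 / 2, by norm_num, by norm_num⟩ hbdd
  rwa [kappaLLY, nhdsWithin_Ico_eq_nhdsLT one_pos, h.limUnder_eq]

end Curvature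

section Geodesic
variable {V : Type*} {G : SimpleGraph V} {k : ℕ} {p : ℕ → V}

lemma dist_le_sub_of_adj (hG : G.Connected) (hadj : ∀ i < k, G.Adj (p i) (p (i + 1)))
    {a b : ℕ} (hab : a ≤ b) (hb : b ≤ k) : G.dist (p a) (p b) ≤ b - a := by
  induction b, hab using Nat.le_induction with
  | base => simp
  | succ b hab ih =>
    have hstep := SimpleGraph.dist_eq_one_iff_adj.mpr (hadj b (by omega))
    have := hG.dist_triangle (u := p a) (v := p b) (w := p (b + 1))
    have := ih (by omega)
    omega

lemma injOn_of_dist_eq (hG : G.Connected) (hdist : G.dist (p 0) (p k) = k)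
    (hadj : ∀ i < k, G.Adj (p i) (p (i + 1))) : Set.InjOn p (Set.Iic k) := by
  have key : ∀ i j, i < j → j ≤ k → p i ≠ p j := by
    intro i j hij hj hpij
    have h0i := dist_le_sub_of_adj hG hadj (Nat.zero_le i) (by omega)
    have hjk := dist_le_sub_of_adj hG hadj hj le_rfl
    have := hG.dist_triangle (u := p 0) (v := p i) (w := p k)
    rw [hpij] at h0i this
    omega
  intro i hi j hj hpij
  rcases lt_trichotomy i j with h | h | h
  exacts [absurd hpij (key i j h hj), h, absurd hpij.symm (key j i h hi)]

variable [Fintype V] [DecidableEq V] [DecidableRel G.Adj]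

lemma sum_range_le_sum_edgeFinset (hG : G.Connected) (hdist : G.dist (p 0) (p k) = k)
    (hadj : ∀ i < k, G.Adj (p i) (p (i + 1))) {g : Sym2 V → ℝ}
    (hg : ∀ e ∈ G.edgeFinset, 0 ≤ g e) :
    ∑ i ∈ Finset.range k, g s(p i, p (i + 1)) ≤ ∑ e ∈ G.edgeFinset, g e := by
  have hinj := injOn_of_dist_eq hG hdist hadj
  have hedge : Set.InjOn (fun i => s(p i, p (i + 1))) (Finset.range k) := by
    intro i hi j hj hij
    simp only [Finset.coe_range, Set.mem_Iio] at hi hj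
    rcases Sym2.eq_iff.mp hij with ⟨h, -⟩ | ⟨h, h'⟩
    · exact hinj (Set.mem_Iic.mpr hi.le) (Set.mem_Iic.mpr hj.le) h
    · have := hinj (Set.mem_Iic.mpr hi.le) (Set.mem_Iic.mpr hj) h
      have := hinj (Set.mem_Iic.mpr hi) (Set.mem_Iic.mpr hj.le) h'
      omega
  rw [← Finset.sum_image (g := fun i => s(p i, p (i + 1))) hedge]
  refine Finset.sum_le_sum_of_subset_of_nonneg (fun e he => ?_) fun e he _ => hg e he
  obtain ⟨i, hi, rfl⟩ := Finset.mem_image.mp he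
  exact SimpleGraph.mem_edgeFinset.mpr (hadj i (Finset.mem_range.mp hi))

lemma sum_kappaAlpha_div_le (hG : G.Connected) (hdeg : ∀ v, 0 < G.degree v) (hk : 1 ≤ k)
    (hdist : G.dist (p 0) (p k) = k) (hadj : ∀ i < k, G.Adj (p i) (p (i + 1))) {α : ℝ}
    (hα₀ : 0 ≤ α) (hα₁ : α ≤ 1) :
    (∑ i ∈ Finset.range k, kappaAlpha G α (p i) (p (i + 1))) / k ≤ kappaAlpha G α (p 0) (p k) := by
  have hW := W_le_sum_range (d := fun a b => (G.dist a b : ℝ)) hG.cast_dist_triangle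
    (fun i => isProbMeasure_lazyWalk hα₀ hα₁ (hdeg (p i))) hk
  have hedge : ∀ i ∈ Finset.range k, kappaAlpha G α (p i) (p (i + 1))
      = 1 - W (fun a b => (G.dist a b : ℝ)) (lazyWalk G α (p i)) (lazyWalk G α (p (i + 1))) :=
    fun i hi => by
      rw [kappaAlpha, SimpleGraph.dist_eq_one_iff_adj.mpr (hadj i (Finset.mem_range.mp hi)),
        Nat.cast_one, div_one]
  have hk₀ : (0 : ℝ) < k := by exact_mod_cast hk
  rw [Finset.sum_congr rfl hedge, Finset.sum_sub_distrib, kappaAlpha, hdist, div_le_iff₀ hk₀,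
    sub_mul, div_mul_cancel₀ _ hk₀.ne']
  simp only [Finset.sum_const, Finset.card_range, nsmul_eq_mul, mul_one]
  linarith

lemma sum_kappaLLY_div_le (hG : G.Connected) (hdeg : ∀ v, 0 < G.degree v) (hk : 1 ≤ k)
    (hdist : G.dist (p 0) (p k) = k) (hadj : ∀ i < k, G.Adj (p i) (p (i + 1))) :
    (∑ i ∈ Finset.range k, kappaLLY G (p i) (p (i + 1))) / k ≤ kappaLLY G (p 0) (p k) := by
  have hne : p 0 ≠ p k := fun h => by rw [h, SimpleGraph.dist_self] at hdist; omega
  have hedges := tendsto_finsetSum (Finset.range k) fun i hi =>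
    tendsto_kappaAlpha_div_kappaLLY hG hdeg (hadj i (Finset.mem_range.mp hi)).ne
  refine le_of_tendsto_of_tendsto (hedges.div_const k)
    (tendsto_kappaAlpha_div_kappaLLY hG hdeg hne) ?_
  filter_upwards [Ioo_mem_nhdsLT one_pos] with α ⟨hα₀, hα₁⟩
  rw [← Finset.sum_div, div_right_comm]
  exact div_le_div_of_nonneg_right (sum_kappaAlpha_div_le hG hdeg hk hdist hadj hα₀.le hα₁.le)
    (by linarith)

lemma sub_ILLY_div_le (hG : G.Connected) (hk : 1 ≤ k) (hdist : G.dist (p 0) (p k) = k)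
    (hadj : ∀ i < k, G.Adj (p i) (p (i + 1))) (κ₀ : ℝ) :
    κ₀ - ILLY G κ₀ / k ≤ (∑ i ∈ Finset.range k, kappaLLY G (p i) (p (i + 1))) / k := by
  have hdeficit := sum_range_le_sum_edgeFinset hG hdist hadj (g := Sym2.lift
    ⟨fun x y => max 0 (κ₀ - kappaLLY G x y), fun x y => by dsimp only; rw [kappaLLY_symm]⟩)
    fun e _ => Sym2.ind (fun x y => le_max_left _ _) e
  simp only [Sym2.lift_mk] at hdeficit
  have hedge : ∀ i ∈ Finset.range k,
      κ₀ - max 0 (κ₀ - kappaLLY G (p i) (p (i + 1))) ≤ kappaLLY G (p i) (p (i + 1)) :=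
    fun i _ => by linarith [le_max_right 0 (κ₀ - kappaLLY G (p i) (p (i + 1)))]
  have hsum := Finset.sum_le_sum hedge
  rw [Finset.sum_sub_distrib, Finset.sum_const, Finset.card_range, nsmul_eq_mul] at hsum
  have hk₀ : (k : ℝ) ≠ 0 := by positivity
  rw [show κ₀ - ILLY G κ₀ / k = (k * κ₀ - ILLY G κ₀) / k by field_simp]
  gcongr
  unfold ILLY
  linarith

end Geodesic

/-- Key lemma for the Lin–Lu–Yau curvature: along a geodesic `x₀, …, x_k`,
`κ_LLY(x₀,x_k) ≥ (∑ κ_LLY(x_{i-1},x_i))/k ≥ κ₀ - I_{κ₀}/k`. -/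
theorem stmt_19 {V : Type*} [Fintype V] [DecidableEq V] (G : SimpleGraph V)
    [DecidableRel G.Adj] (hG : G.Connected) (κ₀ : ℝ) (k : ℕ) (hk : 1 ≤ k) (p : ℕ → V)
    (hdist : G.dist (p 0) (p k) = k)
    (hadj : ∀ i < k, G.Adj (p i) (p (i + 1))) :
    kappaLLY G (p 0) (p k) ≥ (∑ i ∈ Finset.range k, kappaLLY G (p i) (p (i + 1))) / k ∧
    (∑ i ∈ Finset.range k, kappaLLY G (p i) (p (i + 1))) / k ≥ κ₀ - ILLY G κ₀ / k := by
  have : Nontrivial V := ⟨p 0, p 1, (hadj 0 hk).ne⟩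
  have hdeg : ∀ v, 0 < G.degree v := fun v => hG.preconnected.degree_pos_of_nontrivial v
  exact ⟨sum_kappaLLY_div_le hG hdeg hk hdist hadj, sub_ILLY_div_le hG hk hdist hadj κ₀⟩
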